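/- Suppose m ≥ N and the deviations Δ₁,…,Δ_m are i.i.d. real random variables with an arbitrary common distribution. Then the randomly sampled Dirichlet kernel is an isometry in expectation: for every v ∈ ℂ^N, E‖Sv‖₂² = (m/N)‖v‖₂², equivalently E‖𝒩v‖₂² = (m/N)‖v‖₂², where the expectation is over the random deviations. -/

import Mathlib

open scoped BigOperators
open MeasureTheory Matrix

noncomputable section

/-- The complex exponential `e(x) = exp(2πix)`. -/
def ce (x : ℝ) : ℂ := Complex.exp (2 * Real.pi * Complex.I * x)

/-- Half-bandwidth `Ñ = (N-1)/2`. -/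
def Nt (N : ℕ) : ℤ := ((N : ℤ) - 1) / 2

/-- Uniform grid point `t_p = (p-1)/N - 1/2` (zero-based index). -/
def tg (N : ℕ) (p : Fin N) : ℝ := (p : ℝ) / N - 1 / 2

/-- Dirichlet interpolation matrix `S ∈ ℂ^{m×N}`. -/
def dirS (N m : ℕ) (tt : Fin m → ℝ) : Matrix (Fin m) (Fin N) ℂ :=
  fun k p => (N : ℂ)⁻¹ * ∑ u ∈ Finset.Icc (-(Nt N)) (Nt N), ce (u * (tg N p - tt k))

/-- Centered DFT matrix `F ∈ ℂ^{N×N}`. -/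
def dftF (N : ℕ) : Matrix (Fin N) (Fin N) ℂ :=
  fun p u => ((Real.sqrt N : ℂ))⁻¹ * ce (-(tg N p) * ((u : ℤ) - Nt N))

/-- DFT-incoherence parameter of `Ψ`. -/
def dftIncoh (N n : ℕ) (Ψ : Matrix (Fin N) (Fin n) ℂ) : ℝ :=
  ⨆ ℓ : Fin n, ∑ k : Fin N, ‖((dftF N)ᴴ * Ψ) k ℓ‖

/-- Euclidean norm on `ℂ^n`. -/
def norm2 {n : ℕ} (v : Fin n → ℂ) : ℝ := Real.sqrt (∑ i, ‖v i‖ ^ 2)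

/-- `ℓ₁` norm on `ℂ^n`. -/
def norm1 {n : ℕ} (v : Fin n → ℂ) : ℝ := ∑ i, ‖v i‖

/-- `v` has at most `s` nonzero entries. -/
def Sparse {n : ℕ} (s : ℕ) (v : Fin n → ℂ) : Prop :=
  (Finset.univ.filter fun i => v i ≠ 0).card ≤ s

/-- Error of the best `s`-sparse approximation of `g` in `ℓ₁`. -/
def sperr {n : ℕ} (s : ℕ) (g : Fin n → ℂ) : ℝ :=
  sInf {r : ℝ | ∃ h : Fin n → ℂ, Sparse s h ∧ r = norm1 (fun i => h i - g i)}

/-- The 1-periodic signal with Fourier coefficients `c`. -/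
def fcont (c : ℤ → ℂ) (x : ℝ) : ℂ := ∑' ℓ : ℤ, c ℓ * ce (ℓ * x)

/-- Tail `∑_{|ℓ|>Ñ} |c_ℓ|` of the Fourier coefficients. -/
def tailSum (N : ℕ) (c : ℤ → ℂ) : ℝ :=
  ∑' ℓ : ℤ, if Nt N < |ℓ| then ‖c ℓ‖ else 0

/-- The distribution `𝒟` satisfies the deviation model with parameter `θ`. -/
def DevModel (N m : ℕ) (𝒟 : Measure ℝ) (θ : ℝ) : Prop :=
  ∀ j : ℤ, j ≠ 0 → (|j| : ℝ) ≤ 2 * ((N : ℝ) - 1) / m →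
    (2 * N / m) * ‖∫ x, ce (((j * m : ℤ) : ℝ) * x) ∂𝒟‖ ≤ θ

/-- The random nonuniform sample points `t̃_k = (k-1)/m - 1/2 + Δ_k`. -/
def samplePts {Ω : Type*} (m : ℕ) (Δ : Fin m → Ω → ℝ) (ω : Ω) : Fin m → ℝ :=
  fun k => (k : ℝ) / m - 1 / 2 + Δ k ω

end

/-- Centered nonuniform DFT matrix `𝒩 ∈ ℂ^{m×N}`. -/
noncomputable def ndftM (N m : ℕ) (tt : Fin m → ℝ) : Matrix (Fin m) (Fin N) ℂ :=
  fun k u => ((Real.sqrt N : ℂ))⁻¹ * ce (-(tt k) * ((u : ℤ) - Nt N))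

/-!
Since `N` is odd, `S = 𝒩 F*` with `F` unitary, so it suffices to treat `𝒩`. The Gram matrix
`𝒩* 𝒩` has entries `N⁻¹ ∑ₖ e(t̃ₖ (u' - u))`. In expectation each deviation `Δₖ` contributes the
same factor `∫ e((u' - u) x) d𝒟(x)`, which leaves the sum `∑ₖ e(((k-1)/m - 1/2)(u' - u))` over the
uniform grid; it vanishes for `0 < |u' - u| < N ≤ m`. Hence `E[𝒩* 𝒩] = (m/N) I`.
-/

open Finset

lemma ce_add (x y : ℝ) : ce (x + y) = ce x * ce y := by
  rw [ce, ce, ce, ← Complex.exp_add]; push_cast; ring_nf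

lemma star_ce (x : ℝ) : star (ce x) = ce (-x) := by
  rw [ce, ce, Complex.star_def, ← Complex.exp_conj]
  simp only [map_mul, Complex.conj_I, Complex.conj_ofReal, map_ofNat]
  push_cast; ring_nf

lemma ce_eq_one_iff (x : ℝ) : ce x = 1 ↔ ∃ n : ℤ, x = n := by
  have hc : (2 * Real.pi * Complex.I : ℂ) ≠ 0 := by simp [Real.pi_ne_zero]
  rw [ce, Complex.exp_eq_one_iff]
  refine exists_congr fun n => ?_
  rw [mul_comm (n : ℂ), mul_right_inj' hc]
  exact_mod_cast Iff.rfl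

lemma ce_intCast (n : ℤ) : ce n = 1 := (ce_eq_one_iff _).2 ⟨n, rfl⟩

lemma ce_zero : ce 0 = 1 := by simpa using ce_intCast 0

lemma ce_natCast_mul (k : ℕ) (x : ℝ) : ce (k * x) = ce x ^ k := by
  rw [ce, ce, ← Complex.exp_nat_mul]; push_cast; ring_nf

lemma norm_ce (x : ℝ) : ‖ce x‖ = 1 := by
  rw [ce, Complex.norm_exp]; simp

@[fun_prop]
lemma continuous_ce : Continuous ce := by
  unfold ce; fun_prop

lemma inv_sqrt_mul_ce_mul_star (N : ℕ) (x y : ℝ) :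
    ((Real.sqrt N : ℂ)⁻¹ * ce x) * star ((Real.sqrt N : ℂ)⁻¹ * ce y) = (N : ℂ)⁻¹ * ce (x - y) := by
  have hN : ((Real.sqrt N : ℂ))⁻¹ * ((Real.sqrt N : ℂ))⁻¹ = (N : ℂ)⁻¹ := by
    rw [← mul_inv, ← Complex.ofReal_mul, Real.mul_self_sqrt N.cast_nonneg, Complex.ofReal_natCast]
  rw [star_mul', star_ce, star_inv₀, Complex.star_def, Complex.conj_ofReal, sub_eq_add_neg,
    ce_add, ← hN]
  ring

lemma sum_ce_div_add_mul_eq_zero {n : ℕ} (a : ℝ) {d : ℤ} (hd : ¬ (n : ℤ) ∣ d) :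
    ∑ k : Fin n, ce ((k / n + a) * d) = 0 := by
  rcases eq_or_ne n 0 with rfl | hn
  · simp
  have hn' : (n : ℝ) ≠ 0 := by exact_mod_cast hn
  have hζ : ce (d / n) ≠ 1 := by
    rw [ne_eq, ce_eq_one_iff]
    rintro ⟨j, hj⟩
    rw [div_eq_iff hn'] at hj
    exact hd ⟨j, by exact_mod_cast hj.trans (mul_comm _ _)⟩
  have hterm : ∀ k : ℕ, ce ((k / n + a) * d) = ce (a * d) * ce (d / n) ^ k := fun k => by
    rw [← ce_natCast_mul, ← ce_add]; ring_nf
  rw [Fin.sum_univ_eq_sum_range (fun k : ℕ => ce ((k / n + a) * d)) n]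
  simp only [hterm]
  rw [← mul_sum, geom_sum_eq hζ, ← ce_natCast_mul, mul_div_cancel₀ _ hn', ce_intCast]
  simp

lemma Fin.not_dvd_sub_of_ne {n m : ℕ} {i j : Fin n} (hij : i ≠ j) (hnm : n ≤ m) :
    ¬ (m : ℤ) ∣ (i : ℤ) - j := fun hdvd => by
  have := Int.eq_zero_of_abs_lt_dvd hdvd (by rw [abs_lt]; omega)
  exact hij (Fin.ext (by omega))

lemma norm2_sq_eq_re_dotProduct {n : ℕ} (v : Fin n → ℂ) : norm2 v ^ 2 = (star v ⬝ᵥ v).re := by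
  rw [norm2, Real.sq_sqrt (by positivity), dotProduct, Complex.re_sum]
  refine sum_congr rfl fun i _ => ?_
  rw [Pi.star_apply, Complex.star_def, Complex.conj_mul', ← Complex.ofReal_pow, Complex.ofReal_re]

lemma norm2_mulVec_sq {m n : ℕ} (M : Matrix (Fin m) (Fin n) ℂ) (v : Fin n → ℂ) :
    norm2 (M *ᵥ v) ^ 2 = (star v ⬝ᵥ (Mᴴ * M) *ᵥ v).re := by
  rw [norm2_sq_eq_re_dotProduct, star_mulVec, ← dotProduct_mulVec, mulVec_mulVec]

lemma norm2_mulVec_of_conjTranspose_mul_self {m n : ℕ} {M : Matrix (Fin m) (Fin n) ℂ}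
    (hM : Mᴴ * M = 1) (v : Fin n → ℂ) : norm2 (M *ᵥ v) = norm2 v := by
  have hsq : norm2 (M *ᵥ v) ^ 2 = norm2 v ^ 2 := by
    rw [norm2_mulVec_sq, hM, one_mulVec, norm2_sq_eq_re_dotProduct]
  exact (sq_eq_sq₀ (Real.sqrt_nonneg _) (Real.sqrt_nonneg _)).1 hsq

lemma dftF_mul_conjTranspose {N : ℕ} (hN : 0 < N) : dftF N * (dftF N)ᴴ = 1 := by
  ext p p'
  simp only [mul_apply, conjTranspose_apply, dftF, inv_sqrt_mul_ce_mul_star]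
  have hexp : ∀ u : Fin N, -tg N p * (((u : ℤ) : ℝ) - Nt N) - -tg N p' * (((u : ℤ) : ℝ) - Nt N)
      = (u / N + -(Nt N / N)) * ((p' : ℤ) - p : ℤ) := fun u => by
    simp only [tg]; push_cast; ring
  simp only [hexp]
  rcases eq_or_ne p p' with rfl | hpp'
  · simp [ce_zero, Nat.cast_ne_zero.2 hN.ne']
  · rw [← mul_sum, sum_ce_div_add_mul_eq_zero _ (Fin.not_dvd_sub_of_ne (Ne.symm hpp') le_rfl),
      one_apply_ne hpp', mul_zero]

lemma norm2_conjTranspose_dftF_mulVec {N : ℕ} (hN : 0 < N) (v : Fin N → ℂ) :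
    norm2 ((dftF N)ᴴ *ᵥ v) = norm2 v :=
  norm2_mulVec_of_conjTranspose_mul_self (by rw [conjTranspose_conjTranspose,
    dftF_mul_conjTranspose hN]) v

lemma sum_Icc_neg_Nt_eq_sum_fin {N : ℕ} (hN : Odd N) (f : ℤ → ℂ) :
    ∑ u ∈ Icc (-Nt N) (Nt N), f u = ∑ u : Fin N, f (u - Nt N) := by
  obtain ⟨r, rfl⟩ := hN
  have hNt : Nt (2 * r + 1) = r := by simp [Nt]
  rw [hNt]
  refine sum_bij' (fun u hu => ⟨(u + r).toNat, by rw [mem_Icc] at hu; omega⟩)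
    (fun u _ => (u : ℤ) - r) (fun _ _ => mem_univ _) (fun u _ => by rw [mem_Icc]; omega)
    (fun u hu => by rw [mem_Icc] at hu; dsimp only; omega) (fun u _ => by ext; simp)
    (fun u hu => by rw [mem_Icc] at hu; dsimp only; congr; omega)

lemma dirS_eq_ndftM_mul_conjTranspose_dftF {N : ℕ} (hN : Odd N) (m : ℕ) (tt : Fin m → ℝ) :
    dirS N m tt = ndftM N m tt * (dftF N)ᴴ := by
  ext k p
  simp only [mul_apply, conjTranspose_apply, ndftM, dftF, inv_sqrt_mul_ce_mul_star, ← mul_sum,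
    dirS, sum_Icc_neg_Nt_eq_sum_fin hN]
  congr 1
  refine sum_congr rfl fun u _ => congrArg ce ?_
  push_cast; ring

lemma conjTranspose_ndftM_mul_self_apply (N m : ℕ) (tt : Fin m → ℝ) (u' u : Fin N) :
    ((ndftM N m tt)ᴴ * ndftM N m tt) u' u = (N : ℂ)⁻¹ * ∑ k, ce (tt k * ((u' : ℤ) - u : ℤ)) := by
  simp only [mul_apply, conjTranspose_apply, ndftM]
  simp only [mul_comm (star _), inv_sqrt_mul_ce_mul_star, ← mul_sum]
  congr 1
  refine sum_congr rfl fun k _ => congrArg ce ?_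
  push_cast; ring

section Expectation

variable {Ω : Type*} [MeasurableSpace Ω] {μ : Measure Ω}

lemma integrable_ce_comp [IsFiniteMeasure μ] {g : Ω → ℝ} (hg : Measurable g) :
    Integrable (fun ω => ce (g ω)) μ :=
  .of_bound (continuous_ce.measurable.comp hg).aestronglyMeasurable 1
    (.of_forall fun _ => (norm_ce _).le)

lemma integral_re_dotProduct_mulVec {ι : Type*} [Fintype ι] (G : Ω → Matrix ι ι ℂ)
    (hG : ∀ i j, Integrable (fun ω => G ω i j) μ) (v : ι → ℂ) :
    ∫ ω, (star v ⬝ᵥ G ω *ᵥ v).re ∂μ = (star v ⬝ᵥ (of fun i j => ∫ ω, G ω i j ∂μ) *ᵥ v).re := by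
  have hrow : ∀ i, Integrable (fun ω => star v i * (G ω *ᵥ v) i) μ := fun i =>
    (integrable_finsetSum _ fun j _ => (hG i j).mul_const (v j)).const_mul _
  have hquad : Integrable (fun ω => star v ⬝ᵥ G ω *ᵥ v) μ :=
    integrable_finsetSum _ fun i _ => hrow i
  refine (integral_re hquad).trans (congrArg Complex.re ?_)
  simp only [dotProduct]
  rw [integral_finsetSum _ fun i _ => hrow i]
  refine sum_congr rfl fun i _ => ?_
  simp only [mulVec, dotProduct, of_apply]
  rw [integral_const_mul, integral_finsetSum _ fun j _ => (hG i j).mul_const (v j)]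
  simp only [integral_mul_const]

variable {m : ℕ} {Δ : Fin m → Ω → ℝ} {𝒟 : Measure ℝ}

lemma integrable_ce_samplePts_mul [IsFiniteMeasure μ] {k : Fin m} (hmeas : Measurable (Δ k))
    (d : ℝ) : Integrable (fun ω => ce (samplePts m Δ ω k * d)) μ :=
  integrable_ce_comp ((measurable_const.add hmeas).mul_const d)

lemma integral_ce_samplePts_mul [IsFiniteMeasure μ] {k : Fin m} (hmeas : Measurable (Δ k))
    (hdist : Measure.map (Δ k) μ = 𝒟) (d : ℤ) :
    ∫ ω, ce (samplePts m Δ ω k * d) ∂μ = ce ((k / m + -(1 / 2)) * d) * ∫ x, ce (d * x) ∂𝒟 := by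
  have hsplit : ∀ ω, ce (samplePts m Δ ω k * d) = ce ((k / m + -(1 / 2)) * d) * ce (d * Δ k ω) :=
    fun ω => by rw [← ce_add, samplePts]; ring_nf
  simp only [hsplit, integral_const_mul, ← hdist]
  rw [integral_map hmeas.aemeasurable (Continuous.aestronglyMeasurable (by fun_prop))]

lemma integral_conjTranspose_ndftM_mul_self [IsProbabilityMeasure μ] [IsProbabilityMeasure 𝒟]
    {N : ℕ} (hNm : N ≤ m) (hmeas : ∀ k, Measurable (Δ k))
    (hdist : ∀ k, Measure.map (Δ k) μ = 𝒟) :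
    (of fun u' u => ∫ ω, ((ndftM N m (samplePts m Δ ω))ᴴ * ndftM N m (samplePts m Δ ω)) u' u ∂μ)
      = ((m : ℂ) / N) • 1 := by
  ext u' u
  simp only [of_apply, conjTranspose_ndftM_mul_self_apply, integral_const_mul,
    integral_finsetSum _ fun k _ => integrable_ce_samplePts_mul (hmeas k) _, integral_ce_samplePts_mul (hmeas _) (hdist _),
    ← sum_mul, Matrix.smul_apply, smul_eq_mul]
  rcases eq_or_ne u' u with rfl | hne
  · simp [ce_zero, div_eq_inv_mul]
  · rw [sum_ce_div_add_mul_eq_zero _ (Fin.not_dvd_sub_of_ne hne hNm), one_apply_ne hne]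
    simp

lemma integral_norm2_ndftM_samplePts_mulVec_sq [IsProbabilityMeasure μ] [IsProbabilityMeasure 𝒟]
    {N : ℕ} (hNm : N ≤ m) (hmeas : ∀ k, Measurable (Δ k))
    (hdist : ∀ k, Measure.map (Δ k) μ = 𝒟) (w : Fin N → ℂ) :
    ∫ ω, norm2 (ndftM N m (samplePts m Δ ω) *ᵥ w) ^ 2 ∂μ = m / N * norm2 w ^ 2 := by
  have hint : ∀ u' u, Integrable (fun ω =>
      ((ndftM N m (samplePts m Δ ω))ᴴ * ndftM N m (samplePts m Δ ω)) u' u) μ := fun u' u => by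
    simp only [conjTranspose_ndftM_mul_self_apply]
    exact (integrable_finsetSum _ fun k _ => integrable_ce_samplePts_mul (hmeas k) _).const_mul _
  simp only [norm2_mulVec_sq]
  rw [integral_re_dotProduct_mulVec _ hint, integral_conjTranspose_ndftM_mul_self hNm hmeas hdist,
    smul_mulVec, one_mulVec, dotProduct_smul, norm2_sq_eq_re_dotProduct, smul_eq_mul,
    ← Complex.ofReal_natCast, ← Complex.ofReal_natCast, ← Complex.ofReal_div, Complex.re_ofReal_mul]

end Expectation

theorem expected_isometry_general
    (N m : ℕ) (hN : Odd N) (hNpos : 0 < N) (hm : N ≤ m)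
    (Ωs : Type) (mΩ : MeasurableSpace Ωs) (μ : Measure Ωs) (hμ : IsProbabilityMeasure μ)
    (Δ : Fin m → Ωs → ℝ) (hmeas : ∀ k, Measurable (Δ k))
    (𝒟 : Measure ℝ) (h𝒟 : IsProbabilityMeasure 𝒟)
    (hdist : ∀ k, Measure.map (Δ k) μ = 𝒟)
    (v : Fin N → ℂ) :
    (∫ ω, norm2 ((dirS N m (samplePts m Δ ω)).mulVec v) ^ 2 ∂μ) =
      (m : ℝ) / N * norm2 v ^ 2 ∧
    (∫ ω, norm2 ((ndftM N m (samplePts m Δ ω)).mulVec v) ^ 2 ∂μ) =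
      (m : ℝ) / N * norm2 v ^ 2 := by
  refine ⟨?_, integral_norm2_ndftM_samplePts_mulVec_sq hm hmeas hdist v⟩
  simp only [dirS_eq_ndftM_mul_conjTranspose_dftF hN, ← mulVec_mulVec]
  rw [integral_norm2_ndftM_samplePts_mulVec_sq hm hmeas hdist,
    norm2_conjTranspose_dftF_mulVec hNpos]

/-- for `m ≥ N` and i.i.d. deviations with arbitrary common distribution,
the randomly sampled Dirichlet kernel is an isometry in expectation:
`E‖Sv‖₂² = (m/N)‖v‖₂²`, equivalently `E‖𝒩v‖₂² = (m/N)‖v‖₂²`. -/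
theorem expected_isometry
    (N m : ℕ) (hN : Odd N) (hNpos : 0 < N) (hm : N ≤ m)
    (Ωs : Type) (mΩ : MeasurableSpace Ωs) (μ : Measure Ωs) (hμ : IsProbabilityMeasure μ)
    (Δ : Fin m → Ωs → ℝ) (hmeas : ∀ k, Measurable (Δ k))
    (hindep : ProbabilityTheory.iIndepFun Δ μ)
    (𝒟 : Measure ℝ) (h𝒟 : IsProbabilityMeasure 𝒟)
    (hdist : ∀ k, Measure.map (Δ k) μ = 𝒟)
    (v : Fin N → ℂ) :
    (∫ ω, norm2 ((dirS N m (samplePts m Δ ω)).mulVec v) ^ 2 ∂μ) =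
      (m : ℝ) / N * norm2 v ^ 2 ∧
    (∫ ω, norm2 ((ndftM N m (samplePts m Δ ω)).mulVec v) ^ 2 ∂μ) =
      (m : ℝ) / N * norm2 v ^ 2 :=
  expected_isometry_general N m hN hNpos hm Ωs mΩ μ hμ Δ hmeas 𝒟 h𝒟 hdist v
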